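/- arXiv:2504.01313 — 2 statements merged into one kernel-verified Lean document; each statement's English description precedes it below -/
import Mathlib

section
/- For the categorical log-likelihood ℓ(g) = g_{z}·𝟙(z ≠ M) − log(∑_{m=1}^{M-1} exp(g_m) + 1), the negative Hessian matrix H(g) = −∂²ℓ/∂g∂gᵀ satisfies 0 < H(g) ≤ I_{M-1} in the Loewner (positive semidefinite) order; i.e., H(g) is positive definite and I_{M-1} − H(g) is positive semidefinite. -/
open Matrix in


/-- The negative Hessian of the categorical log-likelihood,
`H(g) = (1/A)·diag(exp g) − (1/A²)·exp(g)exp(g)ᵀ` with `A = 1 + ∑ exp(g_m)`,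
satisfies `0 < H(g) ≤ I_{M-1}` in the Loewner order: `H(g)` is positive definite
and `I − H(g)` is positive semidefinite. -/
theorem stmt3 (M : ℕ) (hM : 2 ≤ M) (g : Fin (M - 1) → ℝ)
    (A : ℝ) (hA : A = 1 + ∑ m, Real.exp (g m))
    (H : Matrix (Fin (M - 1)) (Fin (M - 1)) ℝ)
    (hH : H = A⁻¹ • Matrix.diagonal (fun m => Real.exp (g m)) -
      (A ^ 2)⁻¹ • Matrix.vecMulVec (fun m => Real.exp (g m)) (fun m => Real.exp (g m))) :
    H.PosDef ∧ ((1 : Matrix (Fin (M - 1)) (Fin (M - 1)) ℝ) - H).PosSemidef := by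
  set e : Fin (M - 1) → ℝ := fun m => Real.exp (g m) with he
  have hepos : ∀ m, 0 < e m := fun m => Real.exp_pos _
  have hApos : 0 < A := by
    rw [hA]; positivity
  -- each exponential is at most A
  have hle : ∀ m, e m ≤ A := by
    intro m
    rw [hA]
    have := Finset.single_le_sum (f := e) (fun i _ => (hepos i).le) (Finset.mem_univ m)
    linarith
  -- the quadratic form of H
  have hquad : ∀ x : Fin (M - 1) → ℝ,
      x ⬝ᵥ H *ᵥ x = A⁻¹ * (∑ m, e m * x m ^ 2) - (A ^ 2)⁻¹ * (∑ m, e m * x m) ^ 2 := by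
    intro x
    have h1 : x ⬝ᵥ (Matrix.diagonal e) *ᵥ x = ∑ m, e m * x m ^ 2 := by
      simp only [dotProduct, Matrix.mulVec_diagonal]
      exact Finset.sum_congr rfl fun i _ => by ring
    have h2 : x ⬝ᵥ (Matrix.vecMulVec e e) *ᵥ x = (∑ m, e m * x m) ^ 2 := by
      simp only [dotProduct, Matrix.mulVec, Matrix.vecMulVec_apply]
      rw [sq, Finset.sum_mul_sum]
      refine Finset.sum_congr rfl fun i _ => ?_
      rw [Finset.mul_sum]
      exact Finset.sum_congr rfl fun j _ => by ring
    rw [hH, Matrix.sub_mulVec, Matrix.smul_mulVec, Matrix.smul_mulVec,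
      dotProduct_sub, dotProduct_smul, dotProduct_smul,
      h1, h2, smul_eq_mul, smul_eq_mul]
  -- H is symmetric (Hermitian over ℝ)
  have hherm : H.IsHermitian := by
    rw [Matrix.IsHermitian, hH]
    ext i j
    by_cases hij : i = j <;>
      simp [Matrix.conjTranspose_apply, Matrix.sub_apply, Matrix.smul_apply,
        Matrix.diagonal_apply, Matrix.vecMulVec_apply, hij, Ne.symm, mul_comm,
        fun h : ¬ i = j => (fun h' => h h'.symm : ¬ j = i)]
  -- Cauchy–Schwarz: (∑ e x)² ≤ (∑ e)(∑ e x²)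
  have hcs : ∀ x : Fin (M - 1) → ℝ,
      (∑ m, e m * x m) ^ 2 ≤ (∑ m, e m) * ∑ m, e m * x m ^ 2 := by
    intro x
    have := Finset.sum_mul_sq_le_sq_mul_sq Finset.univ
      (fun m => Real.sqrt (e m)) (fun m => Real.sqrt (e m) * x m)
    have e1 : ∀ m, Real.sqrt (e m) * (Real.sqrt (e m) * x m) = e m * x m := by
      intro m
      rw [← mul_assoc, Real.mul_self_sqrt (hepos m).le]
    have e2 : ∀ m, Real.sqrt (e m) ^ 2 = e m := fun m => Real.sq_sqrt (hepos m).le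
    have e3 : ∀ m, (Real.sqrt (e m) * x m) ^ 2 = e m * x m ^ 2 := by
      intro m
      rw [mul_pow, e2]
    simp only [e1, e2, e3] at this
    exact this
  constructor
  · -- positive definiteness
    refine Matrix.posDef_iff_dotProduct_mulVec.mpr ⟨hherm, fun x hx => ?_⟩
    have hsx : star x = x := star_trivial x
    rw [hsx, hquad]
    -- ∑ e x² > 0 since x ≠ 0
    obtain ⟨i, hi⟩ := Function.ne_iff.mp hx
    have hS1 : 0 < ∑ m, e m * x m ^ 2 := by
      refine Finset.sum_pos' (fun m _ => by positivity) ⟨i, Finset.mem_univ i, ?_⟩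
      have : x i ≠ 0 := hi
      positivity
    have hsum : (∑ m, e m) = A - 1 := by rw [hA]; ring
    have hlt : (∑ m, e m * x m) ^ 2 < A * ∑ m, e m * x m ^ 2 := by
      refine lt_of_le_of_lt (hcs x) ?_
      rw [hsum]
      nlinarith
    have : A⁻¹ * (∑ m, e m * x m ^ 2) - (A ^ 2)⁻¹ * (∑ m, e m * x m) ^ 2 =
        (A ^ 2)⁻¹ * (A * (∑ m, e m * x m ^ 2) - (∑ m, e m * x m) ^ 2) := by
      field_simp
    rw [this]
    have h2 : (0:ℝ) < (A ^ 2)⁻¹ := by positivity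
    nlinarith
  · -- I − H is positive semidefinite
    refine Matrix.posSemidef_iff_dotProduct_mulVec.mpr ⟨Matrix.isHermitian_one.sub hherm, fun x => ?_⟩
    have hsx : star x = x := star_trivial x
    rw [hsx, Matrix.sub_mulVec, dotProduct_sub, Matrix.one_mulVec, hquad]
    have hxx : x ⬝ᵥ x = ∑ m, x m ^ 2 := by
      simp only [dotProduct]
      exact Finset.sum_congr rfl fun m _ => by ring
    rw [hxx]
    have hsum : A⁻¹ * (∑ m, e m * x m ^ 2) ≤ ∑ m, x m ^ 2 := by
      rw [Finset.mul_sum]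
      refine Finset.sum_le_sum fun m _ => ?_
      have h1 : e m * x m ^ 2 ≤ A * x m ^ 2 :=
        mul_le_mul_of_nonneg_right (hle m) (sq_nonneg _)
      have h2 : A⁻¹ * (A * x m ^ 2) = x m ^ 2 := by field_simp
      calc A⁻¹ * (e m * x m ^ 2) ≤ A⁻¹ * (A * x m ^ 2) := by
            exact mul_le_mul_of_nonneg_left h1 (by positivity)
        _ = x m ^ 2 := h2
    have hnn : 0 ≤ (A ^ 2)⁻¹ * (∑ m, e m * x m) ^ 2 := by positivity
    linarith
end

section
/- Let D and C be symmetric positive definite n×n matrices with D ≥ (δ+1)·I_n in the Loewner order for some δ > 0. Then tr[ (I_n + (δ+1)C)(I_n + DC)⁻¹ ] ≤ n. -/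
open Matrix

lemma psd_trace_nonneg {n : ℕ} {A : Matrix (Fin n) (Fin n) ℝ} (hA : A.PosSemidef) :
    0 ≤ A.trace := by
  rw [Matrix.trace]
  apply Finset.sum_nonneg
  intro i _
  have := hA.diag_nonneg (i := i)
  simpa [Matrix.diag, dotProduct, Matrix.mulVec, Pi.single_apply] using this

lemma psd_trace_mul_nonneg {n : ℕ} {A B : Matrix (Fin n) (Fin n) ℝ}
    (hA : A.PosSemidef) (hB : B.PosSemidef) : 0 ≤ (A * B).trace := by
  open scoped MatrixOrder in obtain ⟨X, rfl⟩ := CStarAlgebra.nonneg_iff_eq_star_mul_self.mp hA.nonneg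
  rw [Matrix.mul_assoc, Matrix.trace_mul_comm]
  exact psd_trace_nonneg (by simpa [Matrix.star_eq_conjTranspose] using hB.mul_mul_conjTranspose_same X)

/-- For symmetric positive definite `D, C` with `D ≥ (δ+1)Iₙ` in the
Loewner order (`δ > 0`), `tr[(Iₙ + (δ+1)C)(Iₙ + DC)⁻¹] ≤ n`. -/
theorem stmt18 {n : ℕ} (D C : Matrix (Fin n) (Fin n) ℝ)
    (hD : D.PosDef) (hC : C.PosDef) (δ : ℝ) (hδ : 0 < δ)
    (hDge : (D - (δ + 1) • (1 : Matrix (Fin n) (Fin n) ℝ)).PosSemidef) :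
    ((1 + (δ + 1) • C) * (1 + D * C)⁻¹).trace ≤ (n : ℝ) := by
  set A : Matrix (Fin n) (Fin n) ℝ := C⁻¹ + D with hAdef
  have hA : A.PosDef := hC.inv.add hD
  have hCdet : IsUnit C.det := isUnit_iff_ne_zero.mpr hC.det_pos.ne'
  have hAdet : IsUnit A.det := isUnit_iff_ne_zero.mpr hA.det_pos.ne'
  have hkey : (1 : Matrix (Fin n) (Fin n) ℝ) + D * C = A * C := by
    rw [hAdef, Matrix.add_mul, Matrix.nonsing_inv_mul C hCdet]
  have hinv : (1 + D * C)⁻¹ = C⁻¹ * A⁻¹ := by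
    rw [hkey, Matrix.mul_inv_rev]
  have hsimp : (1 + (δ + 1) • C) * (1 + D * C)⁻¹
      = (C⁻¹ + (δ + 1) • (1 : Matrix (Fin n) (Fin n) ℝ)) * A⁻¹ := by
    rw [hinv, ← Matrix.mul_assoc, Matrix.add_mul, Matrix.one_mul,
      Matrix.smul_mul, Matrix.mul_nonsing_inv C hCdet]
  have hn : (n : ℝ) = ((C⁻¹ + D) * A⁻¹).trace := by
    rw [← hAdef, Matrix.mul_nonsing_inv A hAdet, Matrix.trace_one]
    simp
  rw [hsimp, hn]
  have hdiff : ((C⁻¹ + D) * A⁻¹).trace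
      - ((C⁻¹ + (δ + 1) • (1 : Matrix (Fin n) (Fin n) ℝ)) * A⁻¹).trace
      = ((D - (δ + 1) • (1 : Matrix (Fin n) (Fin n) ℝ)) * A⁻¹).trace := by
    rw [← Matrix.trace_sub, ← Matrix.sub_mul]
    ring_nf
    congr 1
    abel_nf
  have hnonneg : 0 ≤ ((D - (δ + 1) • (1 : Matrix (Fin n) (Fin n) ℝ)) * A⁻¹).trace :=
    psd_trace_mul_nonneg hDge hA.inv.posSemidef
  linarith [hdiff]
end
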